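/- With P, P⊥, Ω, Ω⊥, Θ, Θ⊥ as above and M(H) := P(Ω⊥ ∘ H) + P⊥(Ω ∘ H), the identity ‖H‖_F² − ‖M(H)‖_F² = ‖P(Ω ∘ H)‖_F² + ‖P⊥(Ω⊥ ∘ H)‖_F² + 4⟨Θ ∘ H_O, Θ⊥ ∘ H_O⟩ holds for every symmetric matrix H with block off-diagonal part H_O. -/
import Mathlib
open Matrix

def finner {m n : Type*} [Fintype m] [Fintype n]
    (A B : Matrix m n ℝ) : ℝ :=
  (Aᵀ * B).trace

noncomputable def fnorm {m n : Type*} [Fintype m] [Fintype n]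
    (A : Matrix m n ℝ) : ℝ :=
  Real.sqrt ((Aᵀ * A).trace)

lemma finner_comm {m n : Type*} [Fintype m] [Fintype n] (A B : Matrix m n ℝ) :
    finner A B = finner B A := by
  unfold finner
  rw [← Matrix.trace_transpose, Matrix.transpose_mul, Matrix.transpose_transpose]

lemma finner_add_left {m n : Type*} [Fintype m] [Fintype n] (A B C : Matrix m n ℝ) :
    finner (A + B) C = finner A C + finner B C := by
  unfold finner; rw [Matrix.transpose_add, Matrix.add_mul, Matrix.trace_add]

lemma finner_sub_left {m n : Type*} [Fintype m] [Fintype n] (A B C : Matrix m n ℝ) :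
    finner (A - B) C = finner A C - finner B C := by
  unfold finner; rw [Matrix.transpose_sub, Matrix.sub_mul, Matrix.trace_sub]

lemma finner_add_right {m n : Type*} [Fintype m] [Fintype n] (A B C : Matrix m n ℝ) :
    finner A (B + C) = finner A B + finner A C := by
  unfold finner; rw [Matrix.mul_add, Matrix.trace_add]

lemma finner_sub_right {m n : Type*} [Fintype m] [Fintype n] (A B C : Matrix m n ℝ) :
    finner A (B - C) = finner A B - finner A C := by
  unfold finner; rw [Matrix.mul_sub, Matrix.trace_sub]

lemma finner_eq_sum {m n : Type*} [Fintype m] [Fintype n] (A B : Matrix m n ℝ) :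
    finner A B = ∑ i, ∑ j, A i j * B i j := by
  unfold finner
  simp only [Matrix.trace, Matrix.diag_apply, Matrix.mul_apply, Matrix.transpose_apply]
  exact Finset.sum_comm

lemma fnorm_sq {m n : Type*} [Fintype m] [Fintype n] (A : Matrix m n ℝ) :
    fnorm A ^ 2 = finner A A := by
  have h0 : (0:ℝ) ≤ finner A A := by
    rw [finner_eq_sum]
    exact Finset.sum_nonneg fun i _ => Finset.sum_nonneg fun j _ => mul_self_nonneg _
  unfold fnorm
  rw [show (Aᵀ * A).trace = finner A A from rfl, Real.sq_sqrt h0]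

/-- With `P` an orthogonal projection on symmetric matrices,
`P⊥ = Id - P`, `Ω = [[E_r, Θᵀ],[Θ,0]]` (entries of `Θ` in `(0,1)`), `Ω⊥ = E_n - Ω`,
`Θ⊥ = E - Θ`, and `M(H) := P(Ω⊥ ∘ H) + P⊥(Ω ∘ H)`, for every symmetric
`H = [[H_X, H_Oᵀ],[H_O, H_S]]` one has
`‖H‖_F² - ‖M(H)‖_F² = ‖P(Ω ∘ H)‖_F² + ‖P⊥(Ω⊥ ∘ H)‖_F² + 4⟨Θ ∘ H_O, Θ⊥ ∘ H_O⟩`. -/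
theorem stmt_8 {r s : ℕ}
    (P : Matrix (Fin r ⊕ Fin s) (Fin r ⊕ Fin s) ℝ →ₗ[ℝ]
      Matrix (Fin r ⊕ Fin s) (Fin r ⊕ Fin s) ℝ)
    (hPidem : ∀ X, P (P X) = P X)
    (hPadj : ∀ X Y, finner (P X) Y = finner X (P Y))
    (hPsymm : ∀ X : Matrix (Fin r ⊕ Fin s) (Fin r ⊕ Fin s) ℝ, (P X).IsSymm)
    (Θ : Matrix (Fin s) (Fin r) ℝ) (hΘ : ∀ i j, Θ i j ∈ Set.Ioo (0 : ℝ) 1)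
    (HX : Matrix (Fin r) (Fin r) ℝ) (HS : Matrix (Fin s) (Fin s) ℝ)
    (HO : Matrix (Fin s) (Fin r) ℝ) (hHX : HX.IsSymm) (hHS : HS.IsSymm) :
    let Ω : Matrix (Fin r ⊕ Fin s) (Fin r ⊕ Fin s) ℝ :=
      fromBlocks (Matrix.of fun _ _ => 1) Θᵀ Θ 0
    let Ωp : Matrix (Fin r ⊕ Fin s) (Fin r ⊕ Fin s) ℝ := (Matrix.of fun _ _ => 1) - Ω
    let Θp : Matrix (Fin s) (Fin r) ℝ := Matrix.of fun i j => 1 - Θ i j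
    let H : Matrix (Fin r ⊕ Fin s) (Fin r ⊕ Fin s) ℝ := fromBlocks HX HOᵀ HO HS
    let MH := P (Ωp ⊙ H) + ((Ω ⊙ H) - P (Ω ⊙ H))
    fnorm H ^ 2 - fnorm MH ^ 2 =
      fnorm (P (Ω ⊙ H)) ^ 2 + fnorm ((Ωp ⊙ H) - P (Ωp ⊙ H)) ^ 2 +
        4 * finner (Θ ⊙ HO) (Θp ⊙ HO) := by
  intro Ω Ωp Θp H MH
  have hMH : MH = P (Ωp ⊙ H) + ((Ω ⊙ H) - P (Ω ⊙ H)) := rfl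
  -- H decomposes
  have hAB : (Ω ⊙ H) + (Ωp ⊙ H) = H := by
    ext i j
    simp only [Matrix.add_apply, Matrix.hadamard_apply, Ωp, Matrix.sub_apply, Matrix.of_apply]
    ring
  -- cross term
  have hcross : finner (Ω ⊙ H) (Ωp ⊙ H) = 2 * finner (Θ ⊙ HO) (Θp ⊙ HO) := by
    rw [finner_eq_sum, finner_eq_sum]
    simp only [Ω, Ωp, Θp, H, Fintype.sum_sum_type, Matrix.hadamard_apply, Matrix.sub_apply,
      Matrix.of_apply, Matrix.fromBlocks_apply₁₁, Matrix.fromBlocks_apply₁₂,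
      Matrix.fromBlocks_apply₂₁, Matrix.fromBlocks_apply₂₂, Matrix.transpose_apply,
      Matrix.zero_apply, sub_self, mul_zero, zero_mul, Finset.sum_const_zero, add_zero,
      zero_add, one_mul, sub_zero]
    have h1 : ∑ i : Fin r, ∑ j : Fin s, Θ j i * HO j i * ((1 - Θ j i) * HO j i)
        = ∑ j : Fin s, ∑ i : Fin r, Θ j i * HO j i * ((1 - Θ j i) * HO j i) :=
      Finset.sum_comm
    rw [h1]; ring
  have hPP : ∀ X Y, finner (P X) (P Y) = finner X (P Y) := fun X Y => by
    rw [hPadj, hPidem]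
  set A := Ω ⊙ H with hA
  set B := Ωp ⊙ H with hB
  rw [hMH, fnorm_sq, fnorm_sq, fnorm_sq, fnorm_sq, ← hAB]
  simp only [finner_add_left, finner_add_right, finner_sub_left, finner_sub_right]
  have c1 : finner B A = finner A B := finner_comm _ _
  have c2 : finner (P A) A = finner A (P A) := finner_comm _ _
  have c3 : finner (P B) B = finner B (P B) := finner_comm _ _
  have c4 : finner (P B) A = finner A (P B) := finner_comm _ _
  have c5 : finner (P A) B = finner A (P B) := hPadj _ _
  have c6 : finner B (P A) = finner A (P B) := by rw [← c5]; exact finner_comm _ _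
  have d1 : finner (P A) (P A) = finner A (P A) := hPP _ _
  have d2 : finner (P B) (P B) = finner B (P B) := hPP _ _
  have d3 : finner (P A) (P B) = finner A (P B) := hPP _ _
  have d4 : finner (P B) (P A) = finner B (P A) := hPP _ _
  linarith [hcross, c1, c2, c3, c4, c5, c6, d1, d2, d3, d4]
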